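/- arXiv:2311.02839 — 2 statements merged into one kernel-verified Lean document; each statement's English description precedes it below -/
import Mathlib

section
/- For any positive integer n that is a perfect square, √n · Σ_{k=1}^{√n} log₂(k · √n) ≤ log₂(n!) + C · √n · log₂ n for some absolute constant C. -/
open Real Finset

lemma aux_pow_le (m : ℕ) : (m : ℝ) ^ m ≤ (m.factorial : ℝ) * Real.exp m := by
  have h := Real.pow_div_factorial_le_exp (x := (m:ℝ)) (Nat.cast_nonneg m) m
  have hf : (0:ℝ) < m.factorial := by exact_mod_cast m.factorial_pos
  rw [div_le_iff₀ hf] at h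
  linarith [h]

lemma aux_fact_le (s : ℕ) (hs : 1 ≤ s) :
    (s.factorial : ℝ) * Real.exp s ≤ Real.exp 1 * (s : ℝ) ^ (s + 1) := by
  induction s with
  | zero => omega
  | succ t ih =>
    rcases Nat.eq_or_lt_of_le hs with h1 | h1
    · -- t + 1 = 1
      have : t = 0 := by omega
      subst this
      simp [Nat.factorial]
    · have ht : 1 ≤ t := by omega
      have iht := ih ht
      have htR : (1:ℝ) ≤ t := by exact_mod_cast ht
      have htpos : (0:ℝ) < t := by linarith
      -- key: exp 1 * t^(t+1) ≤ (t+1)^(t+1)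
      have hkey : Real.exp 1 * (t:ℝ) ^ (t+1) ≤ ((t:ℝ)+1) ^ (t+1) := by
        have hx : Real.exp ((1:ℝ)/(t+1)) ≤ ((t:ℝ)+1)/t := by
          have h0 : (1:ℝ) - 1/((t:ℝ)+1) ≤ Real.exp (-(1/((t:ℝ)+1))) :=
            Real.one_sub_le_exp_neg _
          have ht1 : (0:ℝ) < (t:ℝ)+1 := by linarith
          have h2 : (t:ℝ)/((t:ℝ)+1) ≤ Real.exp (-(1/((t:ℝ)+1))) := by
            have he : (1:ℝ) - 1/((t:ℝ)+1) = (t:ℝ)/((t:ℝ)+1) := by field_simp; ring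
            linarith [h0, he.symm.le]
          have hmul : Real.exp (1/((t:ℝ)+1)) * ((t:ℝ)/((t:ℝ)+1)) ≤ 1 := by
            have h5 := mul_le_mul_of_nonneg_left h2 (Real.exp_pos (1/((t:ℝ)+1))).le
            rwa [← Real.exp_add, show (1/((t:ℝ)+1)) + (-(1/((t:ℝ)+1))) = (0:ℝ) by ring,
              Real.exp_zero] at h5
          rw [le_div_iff₀ htpos]
          have he2 : Real.exp (1/((t:ℝ)+1)) * ((t:ℝ)/((t:ℝ)+1)) * ((t:ℝ)+1)
              = Real.exp (1/((t:ℝ)+1)) * t := by field_simp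
          nlinarith [hmul, Real.exp_pos (1/((t:ℝ)+1))]
        have hxp : (Real.exp ((1:ℝ)/(t+1))) ^ (t+1) ≤ (((t:ℝ)+1)/t) ^ (t+1) := by
          apply pow_le_pow_left₀ (Real.exp_pos _).le hx
        rw [← Real.exp_nat_mul] at hxp
        rw [show ((t+1 : ℕ) : ℝ) * ((1:ℝ)/(t+1)) = 1 by push_cast; field_simp] at hxp
        have h7 := mul_le_mul_of_nonneg_right hxp (by positivity : (0:ℝ) ≤ (t:ℝ)^(t+1))
        rw [div_pow] at h7
        calc Real.exp 1 * (t:ℝ)^(t+1) ≤ (((t:ℝ)+1)^(t+1) / (t:ℝ)^(t+1)) * (t:ℝ)^(t+1) := h7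
          _ = ((t:ℝ)+1)^(t+1) := by field_simp
      have hstep : ((t+1).factorial : ℝ) * Real.exp (t+1)
          = ((t:ℝ)+1) * ((t.factorial : ℝ) * Real.exp t) * Real.exp 1 := by
        rw [Nat.factorial_succ]
        push_cast
        rw [Real.exp_add]
        ring
      rw [show ((t+1:ℕ):ℝ) = (t:ℝ)+1 from by push_cast; ring, hstep]
      have e1 : (0:ℝ) < Real.exp 1 := Real.exp_pos 1
      calc ((t:ℝ)+1) * ((t.factorial : ℝ) * Real.exp t) * Real.exp 1
          ≤ ((t:ℝ)+1) * (Real.exp 1 * (t:ℝ)^(t+1)) * Real.exp 1 := by gcongr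
        _ = (((t:ℝ)+1) * Real.exp 1) * (Real.exp 1 * (t:ℝ)^(t+1)) := by ring
        _ ≤ (((t:ℝ)+1) * Real.exp 1) * (((t:ℝ)+1)^(t+1)) := by
            exact mul_le_mul_of_nonneg_left hkey (by positivity)
        _ = Real.exp 1 * ((t:ℝ)+1) ^ (t+1+1) := by ring

lemma aux3 (s : ℕ) (hs : 2 ≤ s) :
    ((s:ℝ)^s * s.factorial) ^ s ≤ ((s^2).factorial : ℝ) * ((s:ℝ)^2) ^ (2*s) := by
  set S : ℝ := (s:ℝ) with hS
  have hS2 : (2:ℝ) ≤ S := by rw [hS]; exact_mod_cast hs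
  have hSpos : (0:ℝ) < S := by linarith
  have hfpos : (0:ℝ) < (s.factorial : ℝ) := by exact_mod_cast s.factorial_pos
  have hEpos : (0:ℝ) < Real.exp (S^2) := Real.exp_pos _
  have c1 : (s.factorial : ℝ)^s * Real.exp (S^2) ≤ (Real.exp 1)^s * S^((s+1)*s) := by
    have h := pow_le_pow_left₀ (by positivity) (aux_fact_le s (by omega)) s
    rw [mul_pow, mul_pow, ← pow_mul] at h
    have he : (Real.exp S)^s = Real.exp (S^2) := by
      rw [← Real.exp_nat_mul]; congr 1; rw [hS]; push_cast; ring
    rwa [he] at h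
  have c2 : (S^2)^(s^2) ≤ ((s^2).factorial : ℝ) * Real.exp (S^2) := by
    have h := aux_pow_le (s^2)
    have hcast : ((s^2 : ℕ) : ℝ) = S^2 := by rw [hS]; push_cast; ring
    rwa [hcast] at h
  have epow : S^((s+1)*s) * S^(s*s) = S^s * (S^2)^(s^2) := by
    rw [← pow_add, ← pow_mul, ← pow_add]
    congr 1; ring
  have hfin : (Real.exp 1 * S)^s ≤ ((S^2))^(2*s) := by
    have hb : Real.exp 1 * S ≤ S^4 := by
      have h3 : (3:ℝ) ≤ S^3 := by nlinarith
      have h4 := mul_le_mul_of_nonneg_right h3 (by linarith : (0:ℝ) ≤ S)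
      nlinarith [Real.exp_one_lt_d9, hS2, h4]
    calc (Real.exp 1 * S)^s ≤ (S^4)^s := pow_le_pow_left₀ (by positivity) hb s
      _ = (S^2)^(2*s) := by rw [← pow_mul, ← pow_mul]; congr 1; ring
  have main : ((S^s * s.factorial) ^ s) * Real.exp (S^2)
      ≤ (((s^2).factorial : ℝ) * (S^2)^(2*s)) * Real.exp (S^2) := by
    calc ((S^s * s.factorial) ^ s) * Real.exp (S^2)
        = ((s.factorial:ℝ)^s * Real.exp (S^2)) * S^(s*s) := by
          rw [mul_pow, ← pow_mul]; ring
      _ ≤ ((Real.exp 1)^s * S^((s+1)*s)) * S^(s*s) := by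
          exact mul_le_mul_of_nonneg_right c1 (by positivity)
      _ = (Real.exp 1)^s * (S^((s+1)*s) * S^(s*s)) := by ring
      _ = (Real.exp 1)^s * (S^s * (S^2)^(s^2)) := by rw [epow]
      _ ≤ (Real.exp 1)^s * (S^s * (((s^2).factorial : ℝ) * Real.exp (S^2))) := by
          apply mul_le_mul_of_nonneg_left _ (by positivity)
          exact mul_le_mul_of_nonneg_left c2 (by positivity)
      _ = (((s^2).factorial : ℝ) * (Real.exp 1 * S)^s) * Real.exp (S^2) := by
          rw [mul_pow]; ring
      _ ≤ (((s^2).factorial : ℝ) * (S^2)^(2*s)) * Real.exp (S^2) := by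
          have hf2 : (0:ℝ) ≤ ((s^2).factorial : ℝ) := by positivity
          exact mul_le_mul_of_nonneg_right
            (mul_le_mul_of_nonneg_left hfin hf2) hEpos.le
  exact le_of_mul_le_mul_right main hEpos

/-- For any positive perfect square `n = s²`,
`√n · Σ_{k=1}^{√n} log₂(k·√n) ≤ log₂(n!) + C·√n·log₂ n` for an absolute constant `C`. -/
theorem stmt_10 : ∃ C : ℝ, 0 < C ∧ ∀ n s : ℕ, 0 < n → n = s ^ 2 →
    (s : ℝ) * ∑ k ∈ Finset.Icc 1 s, Real.logb 2 ((k : ℝ) * s) ≤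
      Real.logb 2 (Nat.factorial n) + C * s * Real.logb 2 n := by
  refine ⟨2, by norm_num, ?_⟩
  intro n s hn hns
  subst hns
  have hs0 : s ≠ 0 := by rintro rfl; simp at hn
  have hs1 : 1 ≤ s := Nat.one_le_iff_ne_zero.2 hs0
  rcases eq_or_lt_of_le hs1 with h1 | h2
  · rw [← h1]
    norm_num [Nat.factorial]
  · have hs2 : 2 ≤ s := h2
    have hSpos : (0:ℝ) < s := by exact_mod_cast Nat.lt_of_lt_of_le Nat.zero_lt_one hs1
    have hfpos : (0:ℝ) < (s.factorial : ℝ) := by exact_mod_cast s.factorial_pos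
    have hprod : ∑ k ∈ Finset.Icc 1 s, Real.logb 2 ((k:ℝ) * s)
        = Real.logb 2 ((s:ℝ)^s * s.factorial) := by
      rw [← Real.logb_prod _ _ ?hne]
      case hne =>
        intro k hk
        have hk1 : 1 ≤ k := (Finset.mem_Icc.1 hk).1
        have : (0:ℝ) < (k:ℝ) * s := by
          apply mul_pos _ hSpos
          exact_mod_cast hk1
        exact ne_of_gt this
      congr 1
      rw [Finset.prod_mul_distrib]
      have ha : ∏ k ∈ Finset.Icc 1 s, (k:ℝ) = (s.factorial : ℝ) := by
        rw [← Nat.cast_prod]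
        congr 1
        rw [← Finset.Ico_add_one_right_eq_Icc]
        exact Finset.prod_Ico_id_eq_factorial s
      have hb : ∏ _k ∈ Finset.Icc 1 s, (s:ℝ) = (s:ℝ)^s := by
        rw [Finset.prod_const, Nat.card_Icc]
        norm_num
      rw [ha, hb]; ring
    rw [hprod, ← Real.logb_pow]
    have hle := aux3 s hs2
    have hXpos : (0:ℝ) < ((s:ℝ)^s * s.factorial)^s := by positivity
    calc Real.logb 2 (((s:ℝ)^s * s.factorial)^s)
        ≤ Real.logb 2 (((s^2).factorial : ℝ) * ((s:ℝ)^2)^(2*s)) :=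
          Real.logb_le_logb_of_le one_lt_two hXpos hle
      _ = Real.logb 2 ((s^2).factorial : ℝ) + 2 * (s:ℝ) * Real.logb 2 ((s^2 : ℕ):ℝ) := by
          rw [Real.logb_mul (by positivity) (by positivity), Real.logb_pow]
          push_cast; ring
end

section
/- In a universal interval representation on n vertices, the full representation (e_1,...,e_n) can be reconstructed from the degree sequence (deg(1),...,deg(n)) alone, by the greedy left-to-right procedure: e_k = deg(k) + k - c_k, where c_k is the number of indices j < k with e_j ≥ k. Formally: two universal interval representations on n vertices with identical degree sequences are equal. -/
lemma split_card (n : ℕ) (g : Fin n → Fin n) (i : Fin n) (hg : i ≤ g i) :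
    (Finset.univ.filter
      (fun j : Fin n => j ≠ i ∧ ((i ≤ j ∧ j ≤ g i) ∨ (j ≤ i ∧ i ≤ g j)))).card =
    ((g i : ℕ) - i) +
    (Finset.univ.filter (fun j : Fin n => j < i ∧ i ≤ g j)).card := by
  have hset : (Finset.univ.filter
      (fun j : Fin n => j ≠ i ∧ ((i ≤ j ∧ j ≤ g i) ∨ (j ≤ i ∧ i ≤ g j)))) =
      Finset.Ioc i (g i) ∪ Finset.univ.filter (fun j : Fin n => j < i ∧ i ≤ g j) := by
    ext j
    simp only [Finset.mem_filter, Finset.mem_univ, true_and, Finset.mem_union,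
      Finset.mem_Ioc, Fin.lt_def, Fin.le_def, ne_eq, Fin.ext_iff]
    omega
  have hdisj : Disjoint (Finset.Ioc i (g i))
      (Finset.univ.filter (fun j : Fin n => j < i ∧ i ≤ g j)) := by
    rw [Finset.disjoint_left]
    intro j hj hj'
    simp only [Finset.mem_Ioc] at hj
    simp only [Finset.mem_filter] at hj'
    exact absurd hj'.2.1 (not_lt.mpr hj.1.le)
  rw [hset, Finset.card_union_of_disjoint hdisj, Fin.card_Ioc]

/-- Two universal interval representations on `n` vertices with identical degree
sequences are equal. Here a representation is a function `e : Fin n → Fin n` with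
`i ≤ e i`; vertices `i ≠ j` are adjacent iff their intervals `[i, e i]`, `[j, e j]`
intersect (equivalently, `j ≤ e i` when `i ≤ j`), and `deg i` is the number of
vertices adjacent to `i`. -/
theorem stmt_19 (n : ℕ) (e f : Fin n → Fin n)
    (he : ∀ i, i ≤ e i) (hf : ∀ i, i ≤ f i)
    (hdeg : ∀ i : Fin n,
      (Finset.univ.filter
        (fun j : Fin n => j ≠ i ∧ ((i ≤ j ∧ j ≤ e i) ∨ (j ≤ i ∧ i ≤ e j)))).card =
      (Finset.univ.filter
        (fun j : Fin n => j ≠ i ∧ ((i ≤ j ∧ j ≤ f i) ∨ (j ≤ i ∧ i ≤ f j)))).card) :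
    e = f := by
  suffices H : ∀ m : ℕ, ∀ i : Fin n, (i : ℕ) < m → e i = f i by
    funext i; exact H (i + 1) i (Nat.lt_succ_self _)
  intro m
  induction m with
  | zero => intro i hi; omega
  | succ m IHm =>
    intro i hi
    have IH : ∀ j : Fin n, j < i → e j = f j := fun j hj =>
      IHm j (lt_of_lt_of_le hj (Nat.lt_succ_iff.mp hi))
    have h := hdeg i
    rw [split_card n e i (he i), split_card n f i (hf i)] at h
    have hfil : (Finset.univ.filter (fun j : Fin n => j < i ∧ i ≤ e j)) =
        (Finset.univ.filter (fun j : Fin n => j < i ∧ i ≤ f j)) := by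
      apply Finset.filter_congr
      intro j _
      constructor <;> intro hj
      · exact ⟨hj.1, (IH j hj.1) ▸ hj.2⟩
      · exact ⟨hj.1, (IH j hj.1) ▸ hj.2⟩
    rw [hfil] at h
    have h1 := (he i : (i : ℕ) ≤ e i)
    have h2 := (hf i : (i : ℕ) ≤ f i)
    exact Fin.ext (by omega)
end
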